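/- arXiv:1602.03420 — 3 statements merged into one kernel-verified Lean document; each statement's English description precedes it below -/
import Mathlib

section
/- For the m×m block lower bidiagonal matrix P = D₁ ⊗ L + (F D₂ G) ⊗ I, where D₁ = diag(d_{1,1},…,d_{1,m}) and D₂ = diag(d_{2,1},…,d_{2,m}) are diagonal with all d_{1,j} ≠ 0, L is an n×n invertible lower triangular matrix, F, G are the m×m flip and shifted-flip matrices, the inverse Q = P^{-1} has blocks Q_{i,j} = (−1)^{i−j} (∏_{k=1}^{i−j+1} d_{1,i−k+1}^{-1}) (∏_{k=1}^{i−j} d_{2,m−i+k}) L^{j−i−1} for i ≥ j, and Q_{i,j} = 0 for i < j. -/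
open Matrix Finset

theorem stmt3 (m n : ℕ) (d1 d2 : ℕ → ℂ) (L : Matrix (Fin n) (Fin n) ℂ)
    (hL_unit : IsUnit L)
    (hL_lower : ∀ a b : Fin n, a < b → L a b = 0)
    (hd1 : ∀ j ∈ Finset.Icc 1 m, d1 j ≠ 0)
    -- `P` is the block lower bidiagonal matrix with diagonal blocks `d1 j • L`
    -- and subdiagonal blocks `d2 (m - j) • I` (1-based indexing for `d1, d2`).
    (P : Matrix (Fin m × Fin n) (Fin m × Fin n) ℂ)
    (hP : ∀ (i j : Fin m) (a b : Fin n),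
      P (i, a) (j, b) =
        if (i : ℕ) = (j : ℕ) then d1 ((j : ℕ) + 1) * L a b
        else if (i : ℕ) = (j : ℕ) + 1 then (if a = b then d2 (m - (j : ℕ) - 1) else 0)
        else 0)
    -- `Q` is the claimed inverse.
    (Q : Matrix (Fin m × Fin n) (Fin m × Fin n) ℂ)
    (hQ : ∀ (i j : Fin m) (a b : Fin n),
      Q (i, a) (j, b) =
        if (j : ℕ) ≤ (i : ℕ) then
          (-1 : ℂ) ^ ((i : ℕ) - (j : ℕ))
            * (∏ t ∈ Finset.Icc ((j : ℕ) + 1) ((i : ℕ) + 1), (d1 t)⁻¹)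
            * (∏ t ∈ Finset.Icc (m - (i : ℕ)) (m - (j : ℕ) - 1), d2 t)
            * ((L⁻¹) ^ ((i : ℕ) - (j : ℕ) + 1)) a b
        else 0) :
    P * Q = 1 ∧ Q * P = 1 := by
  have hLdet : IsUnit L.det := (Matrix.isUnit_iff_isUnit_det L).mp hL_unit
  have hLinv : L⁻¹ * L = 1 := Matrix.nonsing_inv_mul L hLdet
  have hpow : ∀ s : ℕ, (L⁻¹) ^ (s + 1) * L = (L⁻¹) ^ s := by
    intro s; rw [pow_succ, mul_assoc, hLinv, mul_one]
  have key : Q * P = 1 := by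
    ext ⟨i, a⟩ ⟨j, b⟩
    rw [Matrix.mul_apply, Fintype.sum_prod_type]
    have him := i.isLt
    have hjlt := j.isLt
    have hzero : ∀ k : Fin m, (k : ℕ) ≠ (j : ℕ) → (k : ℕ) ≠ (j : ℕ) + 1 →
        (∑ c, Q (i, a) (k, c) * P (k, c) (j, b)) = 0 := by
      intro k h1 h2
      apply Finset.sum_eq_zero
      intro c _
      rw [hP, if_neg h1, if_neg h2, mul_zero]
    have hfj : (∑ c, Q (i, a) (j, c) * P (j, c) (j, b)) =
        if (j : ℕ) ≤ (i : ℕ) then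
          (-1 : ℂ) ^ ((i : ℕ) - (j : ℕ))
            * (∏ t ∈ Finset.Icc ((j : ℕ) + 1) ((i : ℕ) + 1), (d1 t)⁻¹)
            * (∏ t ∈ Finset.Icc (m - (i : ℕ)) (m - (j : ℕ) - 1), d2 t)
            * d1 ((j : ℕ) + 1)
            * (((L⁻¹) ^ ((i : ℕ) - (j : ℕ) + 1)) * L) a b
        else 0 := by
      by_cases h : (j : ℕ) ≤ (i : ℕ)
      · rw [if_pos h, Matrix.mul_apply, Finset.mul_sum]
        apply Finset.sum_congr rfl
        intro c _
        rw [hQ, hP, if_pos h, if_pos rfl]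
        ring
      · rw [if_neg h]
        apply Finset.sum_eq_zero
        intro c _
        rw [hQ, if_neg h, zero_mul]
    -- the i = j diagonal computation, used in both branches below
    have hdiag : (i : ℕ) = (j : ℕ) →
        (if (j : ℕ) ≤ (i : ℕ) then
          (-1 : ℂ) ^ ((i : ℕ) - (j : ℕ))
            * (∏ t ∈ Finset.Icc ((j : ℕ) + 1) ((i : ℕ) + 1), (d1 t)⁻¹)
            * (∏ t ∈ Finset.Icc (m - (i : ℕ)) (m - (j : ℕ) - 1), d2 t)
            * d1 ((j : ℕ) + 1)
            * (((L⁻¹) ^ ((i : ℕ) - (j : ℕ) + 1)) * L) a b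
        else 0) = (1 : Matrix (Fin m × Fin n) (Fin m × Fin n) ℂ) (i, a) (j, b) := by
      intro hij
      rw [if_pos (le_of_eq hij.symm)]
      have e0 : (i : ℕ) - (j : ℕ) = 0 := by omega
      have h1 : Finset.Icc ((j : ℕ) + 1) ((i : ℕ) + 1) = {(j : ℕ) + 1} := by
        rw [show (i : ℕ) + 1 = (j : ℕ) + 1 from by omega, Finset.Icc_self]
      have h2 : Finset.Icc (m - (i : ℕ)) (m - (j : ℕ) - 1) = ∅ :=
        Finset.Icc_eq_empty (by omega)
      have hd : d1 ((j : ℕ) + 1) ≠ 0 := hd1 _ (Finset.mem_Icc.mpr ⟨by omega, by omega⟩)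
      rw [e0, hpow 0, pow_zero, h1, h2, Finset.prod_singleton, Finset.prod_empty]
      have hone : (1 : Matrix (Fin m × Fin n) (Fin m × Fin n) ℂ) (i, a) (j, b)
          = if a = b then 1 else 0 := by
        have hijf : i = j := Fin.ext hij
        subst hijf
        by_cases hab : a = b
        · subst hab; simp
        · rw [if_neg hab, Matrix.one_apply_ne (by simp [Prod.ext_iff, hab])]
      rw [hone]
      by_cases hab : a = b
      · subst hab
        simp [Matrix.one_apply, inv_mul_cancel₀ hd]
      · simp [Matrix.one_apply, hab]
    have hone0 : (i : ℕ) ≠ (j : ℕ) →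
        (1 : Matrix (Fin m × Fin n) (Fin m × Fin n) ℂ) (i, a) (j, b) = 0 := by
      intro hij
      refine Matrix.one_apply_ne ?_
      intro h
      exact hij (congrArg (fun p => (p.1 : ℕ)) h)
    by_cases hjm : (j : ℕ) + 1 < m
    · set j' : Fin m := ⟨(j : ℕ) + 1, hjm⟩ with hj'
      have hne : j ≠ j' := by
        intro h
        have := congrArg Fin.val h
        simp [hj'] at this
      have hsplit : (∑ k : Fin m, ∑ c, Q (i, a) (k, c) * P (k, c) (j, b)) =
          (∑ c, Q (i, a) (j, c) * P (j, c) (j, b))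
            + (∑ c, Q (i, a) (j', c) * P (j', c) (j, b)) := by
        calc (∑ k : Fin m, ∑ c, Q (i, a) (k, c) * P (k, c) (j, b))
            = ∑ k ∈ ({j, j'} : Finset (Fin m)), ∑ c, Q (i, a) (k, c) * P (k, c) (j, b) := by
              symm
              apply Finset.sum_subset (Finset.subset_univ _)
              intro k _ hk
              simp only [Finset.mem_insert, Finset.mem_singleton] at hk
              push_neg at hk
              exact hzero k (fun h => hk.1 (Fin.ext h)) (fun h => hk.2 (Fin.ext h))
          _ = _ := Finset.sum_pair hne
      have hfj' : (∑ c, Q (i, a) (j', c) * P (j', c) (j, b)) =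
          (if (j : ℕ) + 1 ≤ (i : ℕ) then
            (-1 : ℂ) ^ ((i : ℕ) - ((j : ℕ) + 1))
              * (∏ t ∈ Finset.Icc ((j : ℕ) + 1 + 1) ((i : ℕ) + 1), (d1 t)⁻¹)
              * (∏ t ∈ Finset.Icc (m - (i : ℕ)) (m - ((j : ℕ) + 1) - 1), d2 t)
              * ((L⁻¹) ^ ((i : ℕ) - ((j : ℕ) + 1) + 1)) a b
          else 0) * d2 (m - (j : ℕ) - 1) := by
        have hPj' : ∀ c, P (j', c) (j, b) = if c = b then d2 (m - (j : ℕ) - 1) else 0 := by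
          intro c
          rw [hP, if_neg (by simp [hj']), if_pos rfl]
        have hQj' : ∀ c, Q (i, a) (j', c) =
            if (j : ℕ) + 1 ≤ (i : ℕ) then
              (-1 : ℂ) ^ ((i : ℕ) - ((j : ℕ) + 1))
                * (∏ t ∈ Finset.Icc ((j : ℕ) + 1 + 1) ((i : ℕ) + 1), (d1 t)⁻¹)
                * (∏ t ∈ Finset.Icc (m - (i : ℕ)) (m - ((j : ℕ) + 1) - 1), d2 t)
                * ((L⁻¹) ^ ((i : ℕ) - ((j : ℕ) + 1) + 1)) a c
            else 0 := by
          intro c; rw [hQ]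
        simp only [hPj', hQj', mul_ite, mul_zero]
        rw [Finset.sum_ite_eq' Finset.univ b]
        simp
      rw [hsplit, hfj, hfj']
      rcases lt_trichotomy ((i : ℕ)) ((j : ℕ)) with hij | hij | hij
      · rw [if_neg (show ¬((j : ℕ) ≤ (i : ℕ)) from by omega),
          if_neg (show ¬((j : ℕ) + 1 ≤ (i : ℕ)) from by omega), hone0 (by omega)]
        ring
      · rw [if_neg (show ¬((j : ℕ) + 1 ≤ (i : ℕ)) from by omega), zero_mul, add_zero]
        exact hdiag hij
      · -- j < i : the two terms cancel, RHS is 0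
        rw [if_pos (show (j : ℕ) ≤ (i : ℕ) from by omega),
          if_pos (show (j : ℕ) + 1 ≤ (i : ℕ) from by omega), hone0 (by omega)]
        have hd : d1 ((j : ℕ) + 1) ≠ 0 := hd1 _ (Finset.mem_Icc.mpr ⟨by omega, by omega⟩)
        have e2 : (i : ℕ) - ((j : ℕ) + 1) + 1 = (i : ℕ) - (j : ℕ) := by omega
        have hsign : (-1 : ℂ) ^ ((i : ℕ) - (j : ℕ))
            = -(-1 : ℂ) ^ ((i : ℕ) - ((j : ℕ) + 1)) := by
          rw [show (i : ℕ) - (j : ℕ) = ((i : ℕ) - ((j : ℕ) + 1)) + 1 from by omega, pow_succ]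
          ring
        have hprod1 : (∏ t ∈ Finset.Icc ((j : ℕ) + 1) ((i : ℕ) + 1), (d1 t)⁻¹)
            = (d1 ((j : ℕ) + 1))⁻¹ * ∏ t ∈ Finset.Icc ((j : ℕ) + 1 + 1) ((i : ℕ) + 1), (d1 t)⁻¹ := by
          rw [← Finset.Ico_add_one_right_eq_Icc, Finset.prod_eq_prod_Ico_succ_bot (by omega),
            Finset.Ico_add_one_right_eq_Icc]
        have hprod2 : (∏ t ∈ Finset.Icc (m - (i : ℕ)) (m - (j : ℕ) - 1), d2 t)
            = (∏ t ∈ Finset.Icc (m - (i : ℕ)) (m - ((j : ℕ) + 1) - 1), d2 t)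
              * d2 (m - (j : ℕ) - 1) := by
          rw [show m - (j : ℕ) - 1 = (m - ((j : ℕ) + 1) - 1) + 1 from by omega,
            Finset.prod_Icc_succ_top (by omega)]
        rw [hpow, e2, hprod1, hprod2, hsign]
        have hcancel : (d1 ((j : ℕ) + 1))⁻¹ * d1 ((j : ℕ) + 1) = 1 := inv_mul_cancel₀ hd
        linear_combination (-((-1 : ℂ) ^ ((i : ℕ) - ((j : ℕ) + 1))
          * (∏ t ∈ Finset.Icc ((j : ℕ) + 1 + 1) ((i : ℕ) + 1), (d1 t)⁻¹)
          * (∏ t ∈ Finset.Icc (m - (i : ℕ)) (m - ((j : ℕ) + 1) - 1), d2 t)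
          * d2 (m - (j : ℕ) - 1)
          * ((L⁻¹) ^ ((i : ℕ) - (j : ℕ))) a b)) * hcancel
    · -- j is the last row index : only the diagonal block contributes
      have hsingle : (∑ k : Fin m, ∑ c, Q (i, a) (k, c) * P (k, c) (j, b)) =
          ∑ c, Q (i, a) (j, c) * P (j, c) (j, b) := by
        apply Finset.sum_eq_single j
        · intro k _ hk
          refine hzero k (fun h => hk (Fin.ext h)) (by have := k.isLt; omega)
        · intro h; exact absurd (Finset.mem_univ j) h
      rw [hsingle, hfj]
      rcases eq_or_lt_of_le (show (i : ℕ) ≤ (j : ℕ) from by omega) with hij | hij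
      · exact hdiag hij
      · rw [if_neg (by omega), hone0 (by omega)]
  exact ⟨mul_eq_one_comm.mpr key, key⟩
end

section
/- Let x, x̃ ∈ ℂⁿ be unit vectors and λ, λ̃ ∈ ℂ. Define X = [x; λx] ∈ ℂ^{2n} and X̃ = [x̃; λ̃x̃] ∈ ℂ^{2n} (vertical concatenation). Then cos θ(X, X̃) ≤ cos θ(x, x̃), where cos θ(u, v) := |u^H v| / (‖u‖₂ ‖v‖₂). Consequently |sin θ(x, x̃)| ≤ |sin θ(X, X̃)|. -/
/-!
Stacking `x` over `λ x` multiplies the inner product by `1 + conj λ * λ'` and the squared norms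
by `1 + |λ|²`, `1 + |λ'|²`. Hence `cos θ(X, X')` is `cos θ(x, x')` times the factor
`|1 + conj λ * λ'| / (√(1 + |λ|²) √(1 + |λ'|²))`, which is at most `1` by Cauchy–Schwarz in `ℂ²`;
the sine inequality follows since cosines are nonnegative.
-/

open Finset

/-- The cosine of the acute angle between the lines spanned by two vectors:
|uᴴv| / (‖u‖₂ ‖v‖₂). -/
noncomputable def cosAngle {m : Type*} [Fintype m] (u v : m → ℂ) : ℝ :=
  ‖∑ i, (starRingEnd ℂ) (u i) * v i‖ /
    (Real.sqrt (∑ i, ‖u i‖ ^ 2) * Real.sqrt (∑ i, ‖v i‖ ^ 2))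

lemma cosAngle_nonneg {m : Type*} [Fintype m] (u v : m → ℂ) : 0 ≤ cosAngle u v := by
  unfold cosAngle
  positivity

lemma norm_one_add_conj_mul_le (a b : ℂ) :
    ‖1 + starRingEnd ℂ a * b‖ ≤ Real.sqrt (1 + ‖a‖ ^ 2) * Real.sqrt (1 + ‖b‖ ^ 2) := by
  calc ‖1 + starRingEnd ℂ a * b‖ ≤ 1 + ‖a‖ * ‖b‖ := by
        simpa using norm_add_le (1 : ℂ) (starRingEnd ℂ a * b)
    _ ≤ Real.sqrt ((1 + ‖a‖ ^ 2) * (1 + ‖b‖ ^ 2)) :=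
        Real.le_sqrt_of_sq_le (by nlinarith [sq_nonneg (‖a‖ - ‖b‖)])
    _ = Real.sqrt (1 + ‖a‖ ^ 2) * Real.sqrt (1 + ‖b‖ ^ 2) := Real.sqrt_mul (by positivity) _

section Stack

variable {m : Type*} [Fintype m] (x y : m → ℂ) (a b : ℂ)

lemma sum_conj_mul_sumElim :
    ∑ i, starRingEnd ℂ (Sum.elim x (fun i => a * x i) i) * Sum.elim y (fun i => b * y i) i
      = (1 + starRingEnd ℂ a * b) * ∑ i, starRingEnd ℂ (x i) * y i := by
  simp only [Fintype.sum_sum_type, Sum.elim_inl, Sum.elim_inr, map_mul]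
  rw [add_mul, one_mul, mul_sum]
  exact congrArg _ (sum_congr rfl fun i _ => by ring)

lemma sum_norm_sq_sumElim :
    ∑ i, ‖Sum.elim x (fun i => a * x i) i‖ ^ 2 = (1 + ‖a‖ ^ 2) * ∑ i, ‖x i‖ ^ 2 := by
  simp only [Fintype.sum_sum_type, Sum.elim_inl, Sum.elim_inr, norm_mul, mul_pow, ← mul_sum]
  ring

lemma cosAngle_sumElim :
    cosAngle (Sum.elim x fun i => a * x i) (Sum.elim y fun i => b * y i)
      = ‖1 + starRingEnd ℂ a * b‖ / (Real.sqrt (1 + ‖a‖ ^ 2) * Real.sqrt (1 + ‖b‖ ^ 2))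
        * cosAngle x y := by
  unfold cosAngle
  rw [sum_conj_mul_sumElim, sum_norm_sq_sumElim, sum_norm_sq_sumElim, norm_mul,
    Real.sqrt_mul (by positivity), Real.sqrt_mul (by positivity), mul_mul_mul_comm,
    mul_div_mul_comm]

lemma cosAngle_sumElim_le :
    cosAngle (Sum.elim x fun i => a * x i) (Sum.elim y fun i => b * y i) ≤ cosAngle x y := by
  rw [cosAngle_sumElim]
  refine mul_le_of_le_one_left (cosAngle_nonneg x y) ?_
  exact div_le_one_of_le₀ (norm_one_add_conj_mul_le a b) (by positivity)

end Stack

theorem stmt8_general (n : ℕ) (x x' : Fin n → ℂ) (lam lam' : ℂ) :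
    cosAngle (Sum.elim x fun i => lam * x i) (Sum.elim x' fun i => lam' * x' i)
        ≤ cosAngle x x' ∧
      Real.sqrt (1 - cosAngle x x' ^ 2) ≤
        Real.sqrt (1 - cosAngle (Sum.elim x fun i => lam * x i)
          (Sum.elim x' fun i => lam' * x' i) ^ 2) := by
  have hcos := cosAngle_sumElim_le x x' lam lam'
  refine ⟨hcos, Real.sqrt_le_sqrt (sub_le_sub_left ?_ 1)⟩
  exact pow_le_pow_left₀ (cosAngle_nonneg _ _) hcos 2

theorem stmt8 (n : ℕ) (x x' : Fin n → ℂ) (lam lam' : ℂ)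
    (hx : ∑ i, ‖x i‖ ^ 2 = 1) (hx' : ∑ i, ‖x' i‖ ^ 2 = 1) :
    cosAngle (Sum.elim x fun i => lam * x i) (Sum.elim x' fun i => lam' * x' i)
        ≤ cosAngle x x' ∧
      Real.sqrt (1 - cosAngle x x' ^ 2) ≤
        Real.sqrt (1 - cosAngle (Sum.elim x fun i => lam * x i)
          (Sum.elim x' fun i => lam' * x' i) ^ 2) :=
  stmt8_general n x x' lam lam'
end

section
/- Let λ ∈ ℂ with 2|λ| ≠ 1 and n' a positive integer. Then Σ_{i'=2}^{n'} (2|λ|)^{i'−1} = (2|λ| − (2|λ|)^{n'})/(1 − 2|λ|), and for the matrix W₀ with blocks (W₀)_{i',j'} = (−Λ)^{i'−j'} for i' ≥ j' and 0 otherwise (Λ = λI_n + |λ|N, N the nilpotent lower Jordan block), the bound ‖W₀‖₂ ≤ 1 + (2|λ| − (2|λ|)^{n'})/(1 − 2|λ|) holds. -/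
/-!
Schur test: for any complex matrix, `‖W‖₂² ≤ ‖W‖∞ ‖Wᵀ‖∞`, the product of the largest absolute row
sum and the largest absolute column sum (weighted Cauchy–Schwarz on each row). Both `-Λ` and its
transpose have absolute row sums at most `|λ| + |λ| = 2|λ|`, so by submultiplicativity the blocks
`(-Λ)^k` of `W₀` and their transposes have `‖·‖∞ ≤ (2|λ|)^k`. A block row or block column of the
lower triangular Toeplitz matrix `W₀` meets each power `(-Λ)^k`, `k < n'`, at most once, hence
`‖W₀‖∞` and `‖W₀ᵀ‖∞` are both at most `∑_{k<n'} (2|λ|)^k = 1 + (2|λ| - (2|λ|)^{n'}) / (1 - 2|λ|)`.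
-/

open Matrix

/-- The n×n nilpotent lower Jordan block: ones on the subdiagonal. -/
noncomputable def Nmat (n : ℕ) : Matrix (Fin n) (Fin n) ℂ :=
  Matrix.of fun i j => if (i : ℕ) = (j : ℕ) + 1 then 1 else 0

/-- The spectral norm (largest singular value) of a complex matrix:
the operator norm of the induced map between Euclidean spaces. -/
noncomputable def specNorm {m n : Type*} [Fintype m] [Fintype n] [DecidableEq n]
    (W : Matrix m n ℂ) : ℝ :=
  ‖LinearMap.toContinuousLinearMap (Matrix.toEuclideanLin W)‖

open Finset

-- Throughout, `‖A‖` of a matrix is the `ℓ∞` operator norm: the largest absolute row sum.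
attribute [local instance] Matrix.linftyOpSeminormedAddCommGroup
  Matrix.linftyOpNormedAddCommGroup Matrix.linftyOpNormedRing Matrix.linftyOpNormedSpace

theorem Finset.sum_comp_le_sum_of_injOn {ι κ M : Type*} [AddCommMonoid M] [PartialOrder M]
    [IsOrderedAddMonoid M] [DecidableEq κ] {s : Finset ι} {t : Finset κ} {g : ι → κ}
    {c : κ → M} (hg : Set.InjOn g s) (hgst : ∀ x ∈ s, g x ∈ t) (hc : ∀ y ∈ t, 0 ≤ c y) :
    ∑ x ∈ s, c (g x) ≤ ∑ y ∈ t, c y := by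
  rw [← sum_image hg]
  exact sum_le_sum_of_subset_of_nonneg (image_subset_iff.2 hgst) fun y hy _ => hc y hy

theorem Finset.sum_Icc_two_pred_eq_sum_Ico_one {M : Type*} [AddCommMonoid M] (f : ℕ → M)
    (N : ℕ) : ∑ i ∈ Icc 2 N, f (i - 1) = ∑ k ∈ Ico 1 N, f k := by
  rw [← Ico_add_one_right_eq_Icc, ← sum_Ico_add' (fun i => f (i - 1)) 1 N 1]
  rfl

section Toeplitz
variable {M : Type*} [AddCommMonoid M] [PartialOrder M] [IsOrderedAddMonoid M] {N : ℕ}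
  {c : ℕ → M}

theorem Fin.sum_ite_le_sub_le_sum_range (hc : ∀ k, 0 ≤ c k) (i : Fin N) :
    ∑ j : Fin N, (if (j : ℕ) ≤ i then c (i - j) else 0) ≤ ∑ k ∈ range N, c k := by
  rw [← sum_filter]
  refine sum_comp_le_sum_of_injOn (g := fun j : Fin N => (i : ℕ) - j) ?_ ?_ fun _ _ => hc _
  · intro j hj j' hj' h
    simp only [coe_filter, mem_univ, true_and, Set.mem_ofPred_eq] at hj hj' h
    omega
  · intro j _
    simp only [mem_range]
    omega

theorem Fin.sum_ite_ge_sub_le_sum_range (hc : ∀ k, 0 ≤ c k) (j : Fin N) :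
    ∑ i : Fin N, (if (j : ℕ) ≤ i then c (i - j) else 0) ≤ ∑ k ∈ range N, c k := by
  rw [← sum_filter]
  refine sum_comp_le_sum_of_injOn (g := fun i : Fin N => (i : ℕ) - j) ?_ ?_ fun _ _ => hc _
  · intro i hi i' hi' h
    simp only [coe_filter, mem_univ, true_and, Set.mem_ofPred_eq] at hi hi' h
    omega
  · intro i _
    simp only [mem_range]
    omega

end Toeplitz

namespace Matrix

variable {ι κ m n α : Type*} [Fintype m] [Fintype n]

section SeminormedAddCommGroup
variable [SeminormedAddCommGroup α]

theorem linfty_opNorm_le_iff {A : Matrix m n α} {S : ℝ} (hS : 0 ≤ S) :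
    ‖A‖ ≤ S ↔ ∀ i, ∑ j, ‖A i j‖ ≤ S := by
  lift S to NNReal using hS
  simp only [← coe_nnnorm, ← NNReal.coe_sum, NNReal.coe_le_coe, linfty_opNNNorm_def,
    Finset.sup_le_iff, mem_univ, true_implies]

theorem sum_norm_le_linfty_opNorm (A : Matrix m n α) (i : m) : ∑ j, ‖A i j‖ ≤ ‖A‖ :=
  (linfty_opNorm_le_iff (norm_nonneg A)).1 le_rfl i

theorem linfty_opNorm_comp_le [Fintype ι] [Fintype κ] (B : Matrix ι κ (Matrix m n α)) {S : ℝ}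
    (hS : 0 ≤ S) (hB : ∀ i, ∑ j, ‖B i j‖ ≤ S) : ‖comp ι κ m n α B‖ ≤ S := by
  refine (linfty_opNorm_le_iff hS).2 fun ⟨i, a⟩ => ?_
  rw [Fintype.sum_prod_type]
  exact (sum_le_sum fun j _ => sum_norm_le_linfty_opNorm (B i j) a).trans (hB i)

end SeminormedAddCommGroup

def powToeplitz [Semiring α] [DecidableEq n] (M : Matrix n n α) (N : ℕ) :
    Matrix (Fin N) (Fin N) (Matrix n n α) :=
  of fun i j => if (j : ℕ) ≤ i then M ^ ((i : ℕ) - j) else 0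

section NormedRing
variable [NormedRing α] [NormOneClass α] [DecidableEq n]

theorem linfty_opNorm_one_le : ‖(1 : Matrix n n α)‖ ≤ 1 := by
  rw [← diagonal_one, linfty_opNorm_diagonal]
  exact (pi_norm_le_iff_of_nonneg zero_le_one).2 fun _ => norm_one.le

theorem linfty_opNorm_pow_le (A : Matrix n n α) : ∀ k, ‖A ^ k‖ ≤ ‖A‖ ^ k
  | 0 => by simpa using linfty_opNorm_one_le
  | k + 1 => norm_pow_le' A k.succ_pos

theorem linfty_opNorm_comp_powToeplitz_le (M : Matrix n n α) (N : ℕ) :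
    ‖comp _ _ _ _ _ (powToeplitz M N)‖ ≤ ∑ k ∈ range N, ‖M‖ ^ k := by
  refine linfty_opNorm_comp_le _ (by positivity) fun i => ?_
  refine (sum_le_sum fun j _ => ?_).trans
    (Fin.sum_ite_le_sub_le_sum_range (fun _ => by positivity) i)
  simp only [powToeplitz, of_apply]
  split_ifs
  · exact linfty_opNorm_pow_le M _
  · exact norm_zero.le

end NormedRing

theorem linfty_opNorm_transpose_comp_powToeplitz_le [NormedCommRing α] [NormOneClass α]
    [DecidableEq n] (M : Matrix n n α) (N : ℕ) :
    ‖(comp _ _ _ _ _ (powToeplitz M N))ᵀ‖ ≤ ∑ k ∈ range N, ‖Mᵀ‖ ^ k := by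
  rw [transpose_comp]
  refine linfty_opNorm_comp_le _ (by positivity) fun j => ?_
  refine (sum_le_sum fun i _ => ?_).trans
    (Fin.sum_ite_ge_sub_le_sum_range (fun _ => by positivity) j)
  simp only [powToeplitz, map_apply, transpose_apply, of_apply]
  split_ifs
  · rw [transpose_pow]
    exact linfty_opNorm_pow_le Mᵀ _
  · rw [transpose_zero, norm_zero]

end Matrix

theorem linfty_opNorm_Nmat_le (n : ℕ) : ‖Nmat n‖ ≤ 1 := by
  refine (Matrix.linfty_opNorm_le_iff zero_le_one).2 fun a => ?_
  simp only [Nmat, Matrix.of_apply, apply_ite norm, norm_one, norm_zero, sum_boole]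
  exact_mod_cast card_le_one.2 fun b hb c hc => by
    simp only [mem_filter, mem_univ, true_and] at hb hc
    omega

theorem linfty_opNorm_transpose_Nmat_le (n : ℕ) : ‖(Nmat n)ᵀ‖ ≤ 1 := by
  refine (Matrix.linfty_opNorm_le_iff zero_le_one).2 fun b => ?_
  simp only [Nmat, Matrix.transpose_apply, Matrix.of_apply, apply_ite norm, norm_one, norm_zero,
    sum_boole]
  exact_mod_cast card_le_one.2 fun a ha c hc => by
    simp only [mem_filter, mem_univ, true_and] at ha hc
    omega

theorem norm_smul_add_norm_smul_le {E : Type*} [SeminormedAddCommGroup E] [NormedSpace ℂ E]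
    (lam : ℂ) {A B : E} (hA : ‖A‖ ≤ 1) (hB : ‖B‖ ≤ 1) :
    ‖lam • A + ((‖lam‖ : ℝ) : ℂ) • B‖ ≤ 2 * ‖lam‖ :=
  calc ‖lam • A + ((‖lam‖ : ℝ) : ℂ) • B‖ ≤ ‖lam‖ * ‖A‖ + ‖lam‖ * ‖B‖ := by
        refine (norm_add_le _ _).trans_eq ?_
        rw [norm_smul, norm_smul, Complex.norm_real, norm_norm]
    _ ≤ 2 * ‖lam‖ := by nlinarith [norm_nonneg lam]

theorem specNorm_le_sqrt_linfty_opNorm_mul {m n : Type*} [Fintype m] [Fintype n]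
    [DecidableEq n] (A : Matrix m n ℂ) : specNorm A ≤ √(‖A‖ * ‖Aᵀ‖) := by
  refine ContinuousLinearMap.opNorm_le_bound _ (Real.sqrt_nonneg _) fun x => ?_
  rw [← Real.sqrt_sq (norm_nonneg _), ← Real.sqrt_sq (norm_nonneg x),
    ← Real.sqrt_mul (by positivity)]
  refine Real.sqrt_le_sqrt ?_
  have hrow (i : m) : ‖∑ j, A i j * x j‖ ^ 2 ≤ ‖A‖ * ∑ j, ‖A i j‖ * ‖x j‖ ^ 2 := calc
    ‖∑ j, A i j * x j‖ ^ 2 ≤ (∑ j, ‖A i j‖ * ‖x j‖) ^ 2 := by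
      gcongr
      exact (norm_sum_le _ _).trans_eq (by simp only [norm_mul])
    _ ≤ (∑ j, ‖A i j‖) * ∑ j, ‖A i j‖ * ‖x j‖ ^ 2 :=
      sum_sq_le_sum_mul_sum_of_sq_le_mul _ (fun _ _ => norm_nonneg _)
        (fun _ _ => by positivity) fun _ _ => le_of_eq (by ring)
    _ ≤ ‖A‖ * ∑ j, ‖A i j‖ * ‖x j‖ ^ 2 := by
      gcongr
      exact Matrix.sum_norm_le_linfty_opNorm A i
  rw [EuclideanSpace.norm_sq_eq, EuclideanSpace.norm_sq_eq]
  calc ∑ i, ‖(Matrix.toEuclideanLin A x) i‖ ^ 2 = ∑ i, ‖∑ j, A i j * x j‖ ^ 2 := rfl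
    _ ≤ ∑ i, ‖A‖ * ∑ j, ‖A i j‖ * ‖x j‖ ^ 2 := sum_le_sum fun i _ => hrow i
    _ = ‖A‖ * ∑ j, (∑ i, ‖Aᵀ j i‖) * ‖x j‖ ^ 2 := by
        simp only [← mul_sum, Matrix.transpose_apply, sum_mul]
        rw [sum_comm]
    _ ≤ ‖A‖ * ∑ j, ‖Aᵀ‖ * ‖x j‖ ^ 2 := by
        gcongr with j
        exact Matrix.sum_norm_le_linfty_opNorm Aᵀ j
    _ = ‖A‖ * ‖Aᵀ‖ * ∑ j, ‖x j‖ ^ 2 := by rw [mul_sum, mul_sum]; simp only [mul_assoc]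

theorem stmt16 (n n' : ℕ) (hn' : 0 < n') (lam : ℂ)
    (hlam : 2 * ‖lam‖ ≠ 1)
    (W0 : Matrix (Fin n' × Fin n) (Fin n' × Fin n) ℂ)
    (hW0 : ∀ (i' j' : Fin n') (a b : Fin n),
      W0 (i', a) (j', b) =
        if (j' : ℕ) ≤ (i' : ℕ) then
          ((-(lam • (1 : Matrix (Fin n) (Fin n) ℂ) + ((‖lam‖ : ℝ) : ℂ) • Nmat n))
              ^ ((i' : ℕ) - (j' : ℕ))) a b
        else 0) :
    ∑ i' ∈ Finset.Icc 2 n', (2 * ‖lam‖) ^ (i' - 1) =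
        (2 * ‖lam‖ - (2 * ‖lam‖) ^ n') / (1 - 2 * ‖lam‖) ∧
      specNorm W0 ≤
        1 + (2 * ‖lam‖ - (2 * ‖lam‖) ^ n') / (1 - 2 * ‖lam‖) := by
  set r := 2 * ‖lam‖
  set M := -(lam • (1 : Matrix (Fin n) (Fin n) ℂ) + ((‖lam‖ : ℝ) : ℂ) • Nmat n)
  have hW : W0 = Matrix.comp _ _ _ _ _ (Matrix.powToeplitz M n') := by
    ext ⟨i', a⟩ ⟨j', b⟩
    rw [hW0]
    simp only [Matrix.comp_apply, Matrix.powToeplitz, Matrix.of_apply]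
    split_ifs <;> rfl
  have hM : ‖M‖ ≤ r := by
    rw [norm_neg]
    exact norm_smul_add_norm_smul_le lam Matrix.linfty_opNorm_one_le (linfty_opNorm_Nmat_le n)
  have hMt : ‖Mᵀ‖ ≤ r := by
    simp only [M, Matrix.transpose_neg, Matrix.transpose_add, Matrix.transpose_smul,
      Matrix.transpose_one, norm_neg]
    exact norm_smul_add_norm_smul_le lam Matrix.linfty_opNorm_one_le
      (linfty_opNorm_transpose_Nmat_le n)
  have hgeom : ∑ i' ∈ Icc 2 n', r ^ (i' - 1) = (r - r ^ n') / (1 - r) := by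
    rw [sum_Icc_two_pred_eq_sum_Ico_one (r ^ ·), geom_sum_Ico' hlam hn', pow_one]
  have hS : 1 + (r - r ^ n') / (1 - r) = ∑ k ∈ range n', r ^ k := by
    rw [← hgeom, sum_Icc_two_pred_eq_sum_Ico_one (r ^ ·), range_eq_Ico,
      sum_eq_sum_Ico_succ_bot hn', pow_zero]
  refine ⟨hgeom, ?_⟩
  rw [hS]
  calc specNorm W0 ≤ √(‖W0‖ * ‖W0ᵀ‖) := specNorm_le_sqrt_linfty_opNorm_mul W0
    _ ≤ √((∑ k ∈ range n', r ^ k) * ∑ k ∈ range n', r ^ k) := by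
        rw [hW]
        gcongr
        · exact (Matrix.linfty_opNorm_comp_powToeplitz_le M n').trans (by gcongr)
        · exact (Matrix.linfty_opNorm_transpose_comp_powToeplitz_le M n').trans (by gcongr)
    _ = ∑ k ∈ range n', r ^ k := Real.sqrt_mul_self (by positivity)
end
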